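/- Local Gaussian representation: for any joint CDF F of a pair of real random variables and any point (y,d) with F(y,d) strictly between the Fréchet bounds max(F_Y(y)+F_D(d)-1, 0) and min(F_Y(y), F_D(d)), where F_Y and F_D are the marginals, there exists a unique ρ ∈ (-1,1) such that F(y,d) = Φ₂(Φ⁻¹(F_Y(y)), Φ⁻¹(F_D(d)); ρ), provided 0 < F_Y(y) < 1 and 0 < F_D(d) < 1. -/

import Mathlib

/-
For fixed `m, n` the map `ρ ↦ Φ₂(m, n; ρ)` is strictly increasing on `(-1, 1)` by Plackett's
identity `∂Φ₂/∂ρ = φ₂ > 0`. Writing `Φ₂` as `∫_{v < m} Φ(z) φ(v) dv` with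
`z = (n - ρ v)/√(1 - ρ²)`, the identity holds because the `ρ`-derivative of the integrand is the
`v`-derivative of `φ₂(v, n; ρ)`. As `ρ → ±1` the argument `z` tends to `±∞` according to the sign
of `n ∓ v`, so by dominated convergence `Φ₂` tends to the Fréchet bounds `min(Φ(m), Φ(n))` and
`max(Φ(m) + Φ(n) - 1, 0)`. The intermediate value theorem and strict monotonicity then give a
unique `ρ` for every value strictly between the bounds.
-/

open MeasureTheory Real Set Filter

noncomputable def stdPdf (x : ℝ) : ℝ := (Real.sqrt (2 * Real.pi))⁻¹ * Real.exp (-(x ^ 2) / 2)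

noncomputable def stdCdf (x : ℝ) : ℝ := ∫ v in Set.Iio x, stdPdf v

noncomputable def Phi2 (μ ν ρ : ℝ) : ℝ :=
  ∫ v in Set.Iio μ, stdCdf ((ν - ρ * v) / Real.sqrt (1 - ρ ^ 2)) * stdPdf v

noncomputable def phi2 (μ ν ρ : ℝ) : ℝ :=
  (2 * Real.pi * Real.sqrt (1 - ρ ^ 2))⁻¹ *
    Real.exp (-(μ ^ 2 - 2 * ρ * μ * ν + ν ^ 2) / (2 * (1 - ρ ^ 2)))

open Topology

section StandardNormal

open ProbabilityTheory

lemma stdPdf_eq_gaussianPDFReal : stdPdf = gaussianPDFReal 0 1 := by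
  ext x
  simp [stdPdf, gaussianPDFReal]

lemma stdPdf_pos (x : ℝ) : 0 < stdPdf x := by
  rw [stdPdf_eq_gaussianPDFReal]
  exact gaussianPDFReal_pos _ _ _ one_ne_zero

lemma stdPdf_nonneg (x : ℝ) : 0 ≤ stdPdf x := (stdPdf_pos x).le

lemma stdPdf_le_inv_sqrt_two_pi (x : ℝ) : stdPdf x ≤ (√(2 * π))⁻¹ := by
  refine mul_le_of_le_one_right (by positivity) (exp_le_one_iff.2 ?_)
  nlinarith [sq_nonneg x]

lemma integrable_stdPdf : Integrable stdPdf := by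
  rw [stdPdf_eq_gaussianPDFReal]
  exact integrable_gaussianPDFReal _ _

@[fun_prop]
lemma continuous_stdPdf : Continuous stdPdf := by
  unfold stdPdf
  fun_prop

lemma hasDerivAt_stdPdf (x : ℝ) : HasDerivAt stdPdf (-x * stdPdf x) x := by
  have h := ((((hasDerivAt_pow 2 x).neg).div_const 2).exp).const_mul (√(2 * π))⁻¹
  refine h.congr_deriv ?_
  simp only [stdPdf, Pi.neg_apply]
  ring

lemma tendsto_stdPdf_atBot : Tendsto stdPdf atBot (𝓝 0) := by
  have h : Tendsto (fun x : ℝ => -(x ^ 2) / 2) atBot atBot := by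
    refine (tendsto_neg_atTop_atBot.comp ?_).atBot_div_const two_pos
    simpa [Function.comp_def] using
      (tendsto_pow_atTop two_ne_zero).comp (tendsto_abs_atBot_atTop (G := ℝ))
  have h_exp := (tendsto_exp_atBot.comp h).const_mul (√(2 * π))⁻¹
  rw [mul_zero] at h_exp
  exact h_exp

lemma integrable_abs_mul_stdPdf : Integrable (fun x => |x| * stdPdf x) := by
  refine ((integrable_mul_exp_neg_mul_sq (b := 1 / 2) (by norm_num)).const_mul
    (√(2 * π))⁻¹).abs.congr (.of_forall fun x => ?_)
  simp only [stdPdf, abs_mul, abs_of_pos (exp_pos _),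
    abs_of_pos (by positivity : 0 < (√(2 * π))⁻¹)]
  ring_nf

lemma stdCdf_eq_cdf : stdCdf = cdf (gaussianReal 0 1) := by
  ext x
  rw [cdf_eq_real, measureReal_def, gaussianReal_apply_eq_integral _ one_ne_zero,
    ENNReal.toReal_ofReal (setIntegral_nonneg measurableSet_Iic fun v _ =>
      gaussianPDFReal_nonneg _ _ _), integral_Iic_eq_integral_Iio, ← stdPdf_eq_gaussianPDFReal]
  rfl

lemma stdCdf_nonneg (x : ℝ) : 0 ≤ stdCdf x := stdCdf_eq_cdf ▸ cdf_nonneg _ x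

lemma stdCdf_le_one (x : ℝ) : stdCdf x ≤ 1 := stdCdf_eq_cdf ▸ cdf_le_one _ x

lemma monotone_stdCdf : Monotone stdCdf := stdCdf_eq_cdf ▸ monotone_cdf _

lemma tendsto_stdCdf_atTop : Tendsto stdCdf atTop (𝓝 1) := stdCdf_eq_cdf ▸ tendsto_cdf_atTop _

lemma tendsto_stdCdf_atBot : Tendsto stdCdf atBot (𝓝 0) := stdCdf_eq_cdf ▸ tendsto_cdf_atBot _

lemma stdCdf_sub_stdCdf (a b : ℝ) : stdCdf b - stdCdf a = ∫ v in a..b, stdPdf v := by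
  simp only [stdCdf, ← integral_Iic_eq_integral_Iio]
  exact intervalIntegral.integral_Iic_sub_Iic integrable_stdPdf.integrableOn
    integrable_stdPdf.integrableOn

lemma hasDerivAt_stdCdf (x : ℝ) : HasDerivAt stdCdf (stdPdf x) x := by
  have h := (intervalIntegral.integral_hasDerivAt_right (a := 0) (b := x)
    integrable_stdPdf.intervalIntegrable (continuous_stdPdf.stronglyMeasurableAtFilter _ _)
    continuous_stdPdf.continuousAt).const_add (stdCdf 0)
  refine h.congr_of_eventuallyEq (.of_forall fun y => ?_)
  dsimp only
  rw [← stdCdf_sub_stdCdf]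
  ring

@[fun_prop]
lemma continuous_stdCdf : Continuous stdCdf :=
  continuous_iff_continuousAt.2 fun x => (hasDerivAt_stdCdf x).continuousAt

lemma stdCdf_neg (x : ℝ) : stdCdf (-x) = 1 - stdCdf x := by
  have h : stdCdf x + ∫ v in Ioi x, stdPdf v = 1 := by
    rw [stdCdf, ← integral_Iic_eq_integral_Iio, intervalIntegral.integral_Iic_add_Ioi
      integrable_stdPdf.integrableOn integrable_stdPdf.integrableOn, stdPdf_eq_gaussianPDFReal,
      integral_gaussianPDFReal_eq_one _ one_ne_zero]
  have h_even : ∫ v in Ioi x, stdPdf v = stdCdf (-x) := by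
    rw [stdCdf, ← integral_Iic_eq_integral_Iio, ← integral_comp_neg_Ioi]
    simp [stdPdf]
  linarith

lemma setIntegral_stdPdf_Iio_inter_Iio (m n : ℝ) :
    ∫ v in Iio n ∩ Iio m, stdPdf v = min (stdCdf m) (stdCdf n) := by
  rw [Iio_inter_Iio, ← monotone_stdCdf.map_min, min_comm]
  rfl

lemma setIntegral_stdPdf_Ioi_inter_Iio (m n : ℝ) :
    ∫ v in Ioi (-n) ∩ Iio m, stdPdf v = max (stdCdf m + stdCdf n - 1) 0 := by
  rw [Ioi_inter_Iio]
  rcases le_or_gt m (-n) with h | h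
  · have := monotone_stdCdf h
    rw [stdCdf_neg] at this
    rw [Ioo_eq_empty h.not_gt, Measure.restrict_empty, integral_zero_measure,
      max_eq_right (by linarith)]
  · have := monotone_stdCdf h.le
    rw [stdCdf_neg] at this
    rw [← integral_Ioc_eq_integral_Ioo, ← intervalIntegral.integral_of_le h.le,
      ← stdCdf_sub_stdCdf, stdCdf_neg, max_eq_left (by linarith)]
    ring

end StandardNormal

lemma one_sub_sq_pos_of_abs_lt_one {ρ : ℝ} (hρ : |ρ| < 1) : 0 < 1 - ρ ^ 2 :=
  sub_pos.2 ((sq_lt_one_iff_abs_lt_one ρ).2 hρ)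

-- `Phi2 m n ρ` is definitionally `∫ v in Iio m, stdCdf (condArg n ρ v) * stdPdf v`.
noncomputable def condArg (n ρ v : ℝ) : ℝ := (n - ρ * v) / √(1 - ρ ^ 2)

noncomputable def Phi2DerivIntegrand (n ρ v : ℝ) : ℝ :=
  stdPdf (condArg n ρ v) * ((ρ * n - v) / √(1 - ρ ^ 2) ^ 3) * stdPdf v

section Correlation

variable {n ρ : ℝ}

@[fun_prop]
lemma continuous_condArg : Continuous (condArg n ρ) := by
  unfold condArg
  fun_prop

lemma hasDerivAt_condArg_rho (hρ : |ρ| < 1) (v : ℝ) :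
    HasDerivAt (fun r => condArg n r v) ((ρ * n - v) / √(1 - ρ ^ 2) ^ 3) ρ := by
  have hpos := one_sub_sq_pos_of_abs_lt_one hρ
  have hs := sq_sqrt hpos.le
  have h := (((hasDerivAt_id' ρ).mul_const v).const_sub n).div
    (((hasDerivAt_pow 2 ρ).const_sub 1).sqrt hpos.ne') (sqrt_pos.2 hpos).ne'
  refine h.congr_deriv ?_
  field_simp
  linear_combination (-2 * v) * hs

lemma phi2_eq_stdPdf_condArg_mul (hρ : |ρ| < 1) (v : ℝ) :
    phi2 v n ρ = (√(1 - ρ ^ 2))⁻¹ * (stdPdf (condArg n ρ v) * stdPdf v) := by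
  have hpos := one_sub_sq_pos_of_abs_lt_one hρ
  have hexp : -(v ^ 2 - 2 * ρ * v * n + n ^ 2) / (2 * (1 - ρ ^ 2)) =
      -(condArg n ρ v ^ 2) / 2 + -(v ^ 2) / 2 := by
    rw [condArg, div_pow, sq_sqrt hpos.le]
    field_simp
    ring
  have hconst : (√(2 * π))⁻¹ * (√(2 * π))⁻¹ = (2 * π)⁻¹ := by
    rw [← mul_inv, mul_self_sqrt (by positivity)]
  rw [phi2, hexp, exp_add, stdPdf, stdPdf, mul_inv]
  linear_combination -(√(1 - ρ ^ 2))⁻¹ * rexp (-condArg n ρ v ^ 2 / 2) * rexp (-v ^ 2 / 2) * hconst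

lemma hasDerivAt_phi2_left (hρ : |ρ| < 1) (v : ℝ) :
    HasDerivAt (fun u => phi2 u n ρ) (Phi2DerivIntegrand n ρ v) v := by
  have hpos := one_sub_sq_pos_of_abs_lt_one hρ
  have hs := sq_sqrt hpos.le
  have hcond : HasDerivAt (condArg n ρ) (-ρ / √(1 - ρ ^ 2)) v :=
    ((((hasDerivAt_id' v).const_mul ρ).const_sub n).div_const _).congr_deriv (by ring)
  have h := (((hasDerivAt_stdPdf _).comp v hcond).mul (hasDerivAt_stdPdf v)).const_mul
    (√(1 - ρ ^ 2))⁻¹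
  rw [funext (phi2_eq_stdPdf_condArg_mul hρ)]
  refine h.congr_deriv ?_
  simp only [Phi2DerivIntegrand, condArg, Function.comp_apply]
  field_simp
  linear_combination (-(stdPdf ((n - ρ * v) / √(1 - ρ ^ 2))) * stdPdf v * v) * hs

lemma tendsto_phi2_atBot (hρ : |ρ| < 1) : Tendsto (fun u => phi2 u n ρ) atBot (𝓝 0) := by
  have hs : 0 ≤ (√(1 - ρ ^ 2))⁻¹ := by positivity
  have h_dom := (tendsto_stdPdf_atBot.const_mul ((√(1 - ρ ^ 2))⁻¹ * (√(2 * π))⁻¹))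
  rw [mul_zero] at h_dom
  refine squeeze_zero (fun u => ?_) (fun u => ?_) h_dom
  · rw [phi2_eq_stdPdf_condArg_mul hρ]
    exact mul_nonneg hs (mul_nonneg (stdPdf_nonneg _) (stdPdf_nonneg _))
  · rw [phi2_eq_stdPdf_condArg_mul hρ, mul_assoc]
    exact mul_le_mul_of_nonneg_left
      (mul_le_mul_of_nonneg_right (stdPdf_le_inv_sqrt_two_pi _) (stdPdf_nonneg _)) hs

lemma hasDerivAt_stdCdf_condArg_mul (hρ : |ρ| < 1) (v : ℝ) :
    HasDerivAt (fun r => stdCdf (condArg n r v) * stdPdf v) (Phi2DerivIntegrand n ρ v) ρ :=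
  ((hasDerivAt_stdCdf _).comp ρ (hasDerivAt_condArg_rho hρ v)).mul_const (stdPdf v)

@[fun_prop]
lemma continuous_Phi2DerivIntegrand : Continuous (Phi2DerivIntegrand n ρ) := by
  unfold Phi2DerivIntegrand
  fun_prop

lemma abs_Phi2DerivIntegrand_le {r : ℝ} (hr : r < 1) (hρ : |ρ| ≤ r) (v : ℝ) :
    |Phi2DerivIntegrand n ρ v| ≤
      (√(2 * π))⁻¹ / √(1 - r ^ 2) ^ 3 * ((|n| + |v|) * stdPdf v) := by
  have hr0 : 0 ≤ r := (abs_nonneg ρ).trans hρ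
  have hρr : ρ ^ 2 ≤ r ^ 2 := sq_le_sq' (abs_le.1 hρ).1 (abs_le.1 hρ).2
  have hs_r : 0 < √(1 - r ^ 2) := sqrt_pos.2 (by nlinarith)
  have hnum : |ρ * n - v| ≤ |n| + |v| :=
    calc |ρ * n - v| ≤ |ρ| * |n| + |v| := (abs_sub _ _).trans_eq (by rw [abs_mul])
      _ ≤ |n| + |v| := by gcongr; exact mul_le_of_le_one_left (abs_nonneg n) (hρ.trans hr.le)
  calc |Phi2DerivIntegrand n ρ v|
      = stdPdf (condArg n ρ v) * (|ρ * n - v| / √(1 - ρ ^ 2) ^ 3) * stdPdf v := by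
        rw [Phi2DerivIntegrand, abs_mul, abs_mul, abs_div, abs_of_nonneg (stdPdf_nonneg _),
          abs_of_nonneg (stdPdf_nonneg _), abs_of_nonneg (pow_nonneg (sqrt_nonneg _) 3)]
    _ ≤ (√(2 * π))⁻¹ * ((|n| + |v|) / √(1 - r ^ 2) ^ 3) * stdPdf v := by
        gcongr
        · exact stdPdf_nonneg v
        · exact stdPdf_le_inv_sqrt_two_pi _
    _ = (√(2 * π))⁻¹ / √(1 - r ^ 2) ^ 3 * ((|n| + |v|) * stdPdf v) := by ring

lemma integrable_add_abs_mul_stdPdf (a : ℝ) : Integrable (fun v => (a + |v|) * stdPdf v) := by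
  refine ((integrable_stdPdf.const_mul a).add integrable_abs_mul_stdPdf).congr
    (.of_forall fun v => ?_)
  simp only [Pi.add_apply, add_mul]

lemma integrable_stdCdf_condArg_mul : Integrable (fun v => stdCdf (condArg n ρ v) * stdPdf v) :=
  integrable_stdPdf.mono' (by fun_prop) <| .of_forall fun v => by
    rw [norm_mul, norm_of_nonneg (stdCdf_nonneg _), norm_of_nonneg (stdPdf_nonneg _)]
    exact mul_le_of_le_one_left (stdPdf_nonneg v) (stdCdf_le_one _)

lemma integrable_Phi2DerivIntegrand (hρ : |ρ| < 1) : Integrable (Phi2DerivIntegrand n ρ) :=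
  ((integrable_add_abs_mul_stdPdf |n|).const_mul _).mono'
    (continuous_Phi2DerivIntegrand.aestronglyMeasurable)
    (.of_forall (abs_Phi2DerivIntegrand_le hρ le_rfl))

lemma integral_Phi2DerivIntegrand (hρ : |ρ| < 1) (m : ℝ) :
    ∫ v in Iio m, Phi2DerivIntegrand n ρ v = phi2 m n ρ := by
  rw [← integral_Iic_eq_integral_Iio, integral_Iic_of_hasDerivAt_of_tendsto
    (f := fun u => phi2 u n ρ) (hasDerivAt_phi2_left hρ m).continuousAt.continuousWithinAt
    (fun v _ => hasDerivAt_phi2_left hρ v) (integrable_Phi2DerivIntegrand hρ).integrableOn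
    (tendsto_phi2_atBot hρ), sub_zero]

-- Plackett's identity `∂Φ₂/∂ρ = φ₂`.
lemma hasDerivAt_Phi2 (hρ : |ρ| < 1) (m : ℝ) :
    HasDerivAt (fun r => Phi2 m n r) (phi2 m n ρ) ρ := by
  set r := (1 + |ρ|) / 2 with hr_def
  have hr : r < 1 := by rw [hr_def]; linarith
  have hball : ∀ ρ' ∈ Metric.ball ρ ((1 - |ρ|) / 2), |ρ'| ≤ r := fun ρ' h => by
    have := abs_sub_abs_le_abs_sub ρ' ρ
    rw [Metric.mem_ball, dist_eq_norm, norm_eq_abs] at h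
    rw [hr_def]
    linarith
  have h := hasDerivAt_integral_of_dominated_loc_of_deriv_le (μ := volume.restrict (Iio m))
    (F := fun r v => stdCdf (condArg n r v) * stdPdf v) (F' := fun r => Phi2DerivIntegrand n r)
    (Metric.ball_mem_nhds ρ (by linarith))
    (.of_forall fun ρ' => by fun_prop)
    integrable_stdCdf_condArg_mul.integrableOn
    continuous_Phi2DerivIntegrand.aestronglyMeasurable
    (.of_forall fun v ρ' hρ' => abs_Phi2DerivIntegrand_le hr (hball ρ' hρ') v)
    ((integrable_add_abs_mul_stdPdf |n|).const_mul _).integrableOn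
    (.of_forall fun v ρ' hρ' => hasDerivAt_stdCdf_condArg_mul ((hball ρ' hρ').trans_lt hr) v)
  rw [← integral_Phi2DerivIntegrand hρ]
  exact h.2

lemma phi2_pos (hρ : |ρ| < 1) (m : ℝ) : 0 < phi2 m n ρ := by
  have := sqrt_pos.2 (one_sub_sq_pos_of_abs_lt_one hρ)
  unfold phi2
  positivity

lemma continuousOn_Phi2 (m : ℝ) : ContinuousOn (Phi2 m n) (Ioo (-1) 1) :=
  fun _ hρ => (hasDerivAt_Phi2 (abs_lt.2 hρ) m).continuousAt.continuousWithinAt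

lemma strictMonoOn_Phi2 (m : ℝ) : StrictMonoOn (Phi2 m n) (Ioo (-1) 1) := by
  refine strictMonoOn_of_deriv_pos (convex_Ioo _ _) (continuousOn_Phi2 m) fun ρ hρ => ?_
  rw [interior_Ioo] at hρ
  rw [(hasDerivAt_Phi2 (abs_lt.2 hρ) m).deriv]
  exact phi2_pos (abs_lt.2 hρ) m

variable {c : ℝ}

lemma tendsto_sqrt_one_sub_sq_nhdsGT_zero (hc : c ^ 2 = 1) :
    Tendsto (fun ρ : ℝ => √(1 - ρ ^ 2)) (𝓝[Ioo (-1) 1] c) (𝓝[>] 0) := by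
  refine tendsto_nhdsWithin_iff.2 ⟨?_, eventually_nhdsWithin_of_forall fun ρ hρ => ?_⟩
  · have h : Continuous (fun ρ : ℝ => √(1 - ρ ^ 2)) := by fun_prop
    simpa [hc] using (h.tendsto c).mono_left nhdsWithin_le_nhds
  · exact sqrt_pos.2 (one_sub_sq_pos_of_abs_lt_one (abs_lt.2 hρ))

lemma tendsto_condArg_atTop (hc : c ^ 2 = 1) {v : ℝ} (hv : c * v < n) :
    Tendsto (fun ρ => condArg n ρ v) (𝓝[Ioo (-1) 1] c) atTop := by
  have hnum : Tendsto (fun ρ : ℝ => n - ρ * v) (𝓝[Ioo (-1) 1] c) (𝓝 (n - c * v)) :=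
    tendsto_nhdsWithin_of_tendsto_nhds ((by fun_prop : Continuous fun ρ : ℝ => n - ρ * v).tendsto c)
  exact (hnum.pos_mul_atTop (by linarith)
    (tendsto_inv_nhdsGT_zero.comp (tendsto_sqrt_one_sub_sq_nhdsGT_zero hc))).congr
      fun ρ => (div_eq_mul_inv _ _).symm

lemma tendsto_condArg_atBot (hc : c ^ 2 = 1) {v : ℝ} (hv : n < c * v) :
    Tendsto (fun ρ => condArg n ρ v) (𝓝[Ioo (-1) 1] c) atBot := by
  have hnum : Tendsto (fun ρ : ℝ => n - ρ * v) (𝓝[Ioo (-1) 1] c) (𝓝 (n - c * v)) :=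
    tendsto_nhdsWithin_of_tendsto_nhds ((by fun_prop : Continuous fun ρ : ℝ => n - ρ * v).tendsto c)
  exact (hnum.neg_mul_atTop (by linarith)
    (tendsto_inv_nhdsGT_zero.comp (tendsto_sqrt_one_sub_sq_nhdsGT_zero hc))).congr
      fun ρ => (div_eq_mul_inv _ _).symm

lemma tendsto_stdCdf_condArg_mul (hc : c ^ 2 = 1) {v : ℝ} (hv : c * v ≠ n) :
    Tendsto (fun ρ => stdCdf (condArg n ρ v) * stdPdf v) (𝓝[Ioo (-1) 1] c)
      (𝓝 ({u | c * u < n}.indicator stdPdf v)) := by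
  rcases hv.lt_or_gt with hlt | hgt
  · rw [indicator_of_mem (show v ∈ {u | c * u < n} from hlt)]
    simpa using (tendsto_stdCdf_atTop.comp (tendsto_condArg_atTop hc hlt)).mul_const (stdPdf v)
  · rw [indicator_of_notMem (show v ∉ {u | c * u < n} from hgt.not_gt)]
    simpa using (tendsto_stdCdf_atBot.comp (tendsto_condArg_atBot hc hgt)).mul_const (stdPdf v)

lemma tendsto_Phi2_nhdsWithin (hc : c ^ 2 = 1) (m : ℝ) :
    Tendsto (Phi2 m n) (𝓝[Ioo (-1) 1] c) (𝓝 (∫ v in {u | c * u < n} ∩ Iio m, stdPdf v)) := by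
  have hc0 : c ≠ 0 := by rintro rfl; norm_num at hc
  rw [← Measure.restrict_restrict (measurableSet_lt (measurable_const_mul c) measurable_const),
    ← integral_indicator (measurableSet_lt (measurable_const_mul c) measurable_const)]
  refine tendsto_integral_filter_of_dominated_convergence stdPdf
    (.of_forall fun ρ => by fun_prop) (.of_forall fun ρ => .of_forall fun v => ?_)
    integrable_stdPdf.integrableOn ?_
  · rw [norm_mul, norm_of_nonneg (stdCdf_nonneg _), norm_of_nonneg (stdPdf_nonneg _)]
    exact mul_le_of_le_one_left (stdPdf_nonneg v) (stdCdf_le_one _)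
  · filter_upwards [ae_restrict_of_ae (volume.ae_ne (n / c))] with v hv
    exact tendsto_stdCdf_condArg_mul hc fun h => hv (by field_simp; linarith)

end Correlation

lemma tendsto_Phi2_one (m n : ℝ) :
    Tendsto (Phi2 m n) (𝓝[Ioo (-1) 1] 1) (𝓝 (min (stdCdf m) (stdCdf n))) := by
  have h := tendsto_Phi2_nhdsWithin (n := n) (one_pow 2) m
  have hset : {u : ℝ | 1 * u < n} = Iio n := by ext u; simp
  rwa [hset, setIntegral_stdPdf_Iio_inter_Iio] at h

lemma tendsto_Phi2_neg_one (m n : ℝ) :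
    Tendsto (Phi2 m n) (𝓝[Ioo (-1) 1] (-1)) (𝓝 (max (stdCdf m + stdCdf n - 1) 0)) := by
  have h := tendsto_Phi2_nhdsWithin (n := n) (by norm_num : (-1 : ℝ) ^ 2 = 1) m
  have hset : {u : ℝ | -1 * u < n} = Ioi (-n) := by ext u; simp [neg_lt]
  rwa [hset, setIntegral_stdPdf_Ioi_inter_Iio] at h

theorem existsUnique_Phi2_eq {m n c : ℝ} (hlow : max (stdCdf m + stdCdf n - 1) 0 < c)
    (hup : c < min (stdCdf m) (stdCdf n)) : ∃! ρ : ℝ, ρ ∈ Ioo (-1) 1 ∧ c = Phi2 m n ρ := by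
  have h_neg_one := left_nhdsWithin_Ioo_neBot (show (-1 : ℝ) < 1 by norm_num)
  have h_one := right_nhdsWithin_Ioo_neBot (show (-1 : ℝ) < 1 by norm_num)
  obtain ⟨ρ, hρ, hρc⟩ := isPreconnected_Ioo.intermediate_value_Ioo
    (l₁ := 𝓝[Ioo (-1) 1] (-1)) (l₂ := 𝓝[Ioo (-1) 1] 1) inf_le_right inf_le_right
    (continuousOn_Phi2 m) (tendsto_Phi2_neg_one m n) (tendsto_Phi2_one m n) ⟨hlow, hup⟩
  exact ⟨ρ, ⟨hρ, hρc.symm⟩, fun ρ' ⟨hρ', hρ'c⟩ =>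
    (strictMonoOn_Phi2 m).injOn hρ' hρ (hρ'c.symm.trans hρc.symm)⟩

theorem stmt6_general (F : ℝ → ℝ → ℝ) (FY FD : ℝ → ℝ)
    (y d : ℝ)
    (hlow : max (FY y + FD d - 1) 0 < F y d) (hup : F y d < min (FY y) (FD d))
    (m n : ℝ) (hm : stdCdf m = FY y) (hn : stdCdf n = FD d) :
    ∃! ρ : ℝ, ρ ∈ Set.Ioo (-1 : ℝ) 1 ∧ F y d = Phi2 m n ρ := by
  rw [← hm, ← hn] at hlow hup
  exact existsUnique_Phi2_eq hlow hup

theorem stmt6 {Ω : Type*} [MeasurableSpace Ω] (ℙ : Measure Ω) [IsProbabilityMeasure ℙ]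
    (Y D : Ω → ℝ) (F : ℝ → ℝ → ℝ) (FY FD : ℝ → ℝ)
    (hF : ∀ y d, F y d = (ℙ {ω | Y ω ≤ y ∧ D ω ≤ d}).toReal)
    (hFY : ∀ y, FY y = (ℙ {ω | Y ω ≤ y}).toReal)
    (hFD : ∀ d, FD d = (ℙ {ω | D ω ≤ d}).toReal)
    (y d : ℝ)
    (hY0 : 0 < FY y) (hY1 : FY y < 1) (hD0 : 0 < FD d) (hD1 : FD d < 1)
    (hlow : max (FY y + FD d - 1) 0 < F y d) (hup : F y d < min (FY y) (FD d))
    (m n : ℝ) (hm : stdCdf m = FY y) (hn : stdCdf n = FD d) :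
    ∃! ρ : ℝ, ρ ∈ Set.Ioo (-1 : ℝ) 1 ∧ F y d = Phi2 m n ρ :=
  stmt6_general F FY FD y d hlow hup m n hm hn
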